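/- Let P be a finite, graded, bounded poset of rank n ≥ 1. Then (1+y)·ω(Ψ̃_P(a,b)) = (1-(-y)^n)·(a-b)^{n-1} + (1+y)·∑_{0̂ < w < 1̂} (a-b)^{rk(w)-1}·(b - (-y)^{rk(w)}·a)·ω(Ψ̃_{[w,1̂]}(a,b)). -/

import Mathlib

open Polynomial

noncomputable section

/-- The coefficient ring `ℤ[y]`. -/
abbrev NCR : Type := Polynomial ℤ

/-- The ring `ℤ[y]⟨a,b⟩` of noncommutative polynomials in the letters `a` (encoded `false`)
and `b` (encoded `true`) with coefficients in `ℤ[y]`. -/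
abbrev NCPoly : Type := MonoidAlgebra NCR (FreeMonoid Bool)

/-- The variable `a`. -/
def Aa : NCPoly := MonoidAlgebra.of NCR (FreeMonoid Bool) (FreeMonoid.of false)

/-- The variable `b`. -/
def Bb : NCPoly := MonoidAlgebra.of NCR (FreeMonoid Bool) (FreeMonoid.of true)

/-- The `ω`-transformation on a single `ab`-monomial (word in `a`,`b`): every occurrence of
the factor `ab` is replaced by `(1+y)ab + (y+y²)ba`, and then all remaining occurrences of `a`
are replaced by `a+yb` and of `b` by `b+ya`. -/
def omegaWord : List Bool → NCPoly
  | [] => 1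
  | false :: true :: rest =>
      (((1 + X : NCR)) • (Aa * Bb) + ((X + X ^ 2 : NCR)) • (Bb * Aa)) * omegaWord rest
  | false :: rest => (Aa + (X : NCR) • Bb) * omegaWord rest
  | true :: rest => (Bb + (X : NCR) • Aa) * omegaWord rest

/-- The `ω`-transformation on `ℤ[y]⟨a,b⟩`, extended linearly from `ab`-monomials. -/
def omega (f : NCPoly) : NCPoly :=
  (MonoidAlgebra.coeff f : FreeMonoid Bool →₀ NCR).sum fun w c => c • omegaWord (FreeMonoid.toList w)

/-- The `ι`-transformation on `ℤ[y]⟨a,b⟩`: it removes the initial letter from every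
`ab`-monomial (and kills the empty monomial). -/
def iota (f : NCPoly) : NCPoly :=
  (MonoidAlgebra.coeff f : FreeMonoid Bool →₀ NCR).sum fun w c =>
    match FreeMonoid.toList w with
    | [] => 0
    | _ :: rest => c • MonoidAlgebra.of NCR (FreeMonoid Bool) (FreeMonoid.ofList rest)

/-- `wt_S(a,b) = w_0 ⋯ w_{n-1}` where `w_k = b` if `k ∈ S` and `w_k = a - b` otherwise. -/
def wtS (n : ℕ) (S : Finset ℕ) : NCPoly :=
  ((List.range n).map fun j => if j ∈ S then Bb else Aa - Bb).prod

/-- Evaluation `f(y,a,b) ↦ f(-x,1,x)` used to define (augmented) Chow polynomials. -/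
def evalChow (f : NCPoly) : Polynomial ℤ :=
  (MonoidAlgebra.coeff f : FreeMonoid Bool →₀ NCR).sum fun w c =>
    c.comp (-X) * X ^ ((FreeMonoid.toList w).count true)

/-- The `ab`-monomial `m_T = m_0 ⋯ m_{n-1}` with `m_i = b` if `i ∈ T` and `m_i = a` else. -/
def mT (n : ℕ) (T : Finset ℕ) : FreeMonoid Bool :=
  FreeMonoid.ofList ((List.range n).map fun i => decide (i ∈ T))

variable {P : Type*} [Fintype P] [PartialOrder P]

open Classical in
/-- The Möbius function of a finite poset:
`μ(w,w) = 1` and `μ(u,w) = -∑_{u ≤ v < w} μ(u,v)` for `u ≠ w`. -/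
def mobius (u : P) : P → ℤ
  | w =>
    if u = w then 1
    else - ∑ v ∈ (Finset.univ.filter fun v : P => u ≤ v ∧ v < w).attach, mobius u v.1
  termination_by w => (Finset.univ.filter fun v : P => u ≤ v ∧ v ≤ w).card
  decreasing_by
    have hv := v.2
    simp only [Finset.mem_filter, Finset.mem_univ, true_and] at hv
    apply Finset.card_lt_card
    constructor
    · intro x hx
      simp only [Finset.mem_filter, Finset.mem_univ, true_and] at hx ⊢
      exact ⟨hx.1, hx.2.trans hv.2.le⟩
    · intro hsub
      have hw : w ∈ Finset.univ.filter fun v : P => u ≤ v ∧ v ≤ w := by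
        simp only [Finset.mem_filter, Finset.mem_univ, true_and]
        exact ⟨hv.1.trans hv.2.le, le_refl w⟩
      have := hsub hw
      simp only [Finset.mem_filter, Finset.mem_univ, true_and] at this
      exact absurd (lt_of_le_of_lt this.2 hv.2) (lt_irrefl w)

open Classical in
/-- The Poincaré polynomial of the interval `[u,w]`, with respect to the rank function `rk`:
`Poin_{[u,w]}(y) = ∑_{u ≤ v ≤ w} μ(u,v)·(-y)^{rk(v) - rk(u)}`. -/
def poin (rk : P → ℕ) (u w : P) : Polynomial ℤ :=
  ∑ v ∈ Finset.univ.filter fun v : P => u ≤ v ∧ v ≤ w,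
    mobius u v • (-X : Polynomial ℤ) ^ (rk v - rk u)

variable [BoundedOrder P]

open Classical in
/-- The extended `ab`-index of the interval `[u₀, ⊤]` of `P` (with ranks taken relative
to `u₀`): the sum over all chains `u₀ ≤ C_1 < ⋯ < C_k < C_{k+1} = ⊤` of
`Poin_{P,C}(y)·wt_C(a,b)`. -/
def exPsiFrom (rk : P → ℕ) (u₀ : P) : NCPoly :=
  ∑ k ∈ Finset.range (Fintype.card P),
    ∑ c ∈ Finset.univ.filter fun c : Fin (k + 1) → P =>
        StrictMono c ∧ c (Fin.last k) = (⊤ : P) ∧ u₀ ≤ c 0,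
      (∏ i : Fin k, poin rk (c i.castSucc) (c i.succ)) •
        wtS (rk (⊤ : P) - rk u₀) (Finset.univ.image fun i : Fin k => rk (c i.castSucc) - rk u₀)

open Classical in
/-- The `ab`-index of the interval `[u₀, ⊤]` of `P`: the sum over all chains
`u₀ ≤ C_1 < ⋯ < C_k < C_{k+1} = ⊤` of `wt_C(a,b)`. -/
def psiFrom (rk : P → ℕ) (u₀ : P) : NCPoly :=
  ∑ k ∈ Finset.range (Fintype.card P),
    ∑ c ∈ Finset.univ.filter fun c : Fin (k + 1) → P =>
        StrictMono c ∧ c (Fin.last k) = (⊤ : P) ∧ u₀ ≤ c 0,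
      wtS (rk (⊤ : P) - rk u₀) (Finset.univ.image fun i : Fin k => rk (c i.castSucc) - rk u₀)

/-- `exΨ̃ = ι(exΨ)` for the interval `[u₀, ⊤]`. -/
def exPsiTildeFrom (rk : P → ℕ) (u₀ : P) : NCPoly := iota (exPsiFrom rk u₀)

/-- `Ψ̃ = ι(Ψ)` for the interval `[u₀, ⊤]`. -/
def psiTildeFrom (rk : P → ℕ) (u₀ : P) : NCPoly := iota (psiFrom rk u₀)

open Classical in
/-- The flag `f`-vector `α(S)`: the number of maximal chains of the rank-selected subposet,
i.e. of chains `C_1 < ⋯ < C_k < C_{k+1} = ⊤` with `{rk(C_1), …, rk(C_k)} = S`. -/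
def flagAlpha (rk : P → ℕ) (S : Finset ℕ) : ℕ :=
  ∑ k ∈ Finset.range (Fintype.card P),
    (Finset.univ.filter fun c : Fin (k + 1) → P =>
      StrictMono c ∧ c (Fin.last k) = (⊤ : P) ∧
        (Finset.univ.image fun i : Fin k => rk (c i.castSucc)) = S).card

/-- The flag `h`-vector `β(T) = ∑_{S ⊆ T} (-1)^{|T∖S|} α(S)`. -/
def flagBeta (rk : P → ℕ) (T : Finset ℕ) : ℤ :=
  ∑ S ∈ T.powerset, (-1 : ℤ) ^ (T \ S).card * (flagAlpha rk S : ℤ)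

/-- An `R`-labeling of the graded poset `P`: every nontrivial interval `[u,w]` has a unique
maximal (i.e. saturated) chain with weakly increasing labels. -/
def IsRLabeling (rk : P → ℕ) (lab : P → P → ℤ) : Prop :=
  ∀ u w : P, u < w →
    ∃! c : Fin (rk w - rk u + 1) → P,
      c 0 = u ∧ c (Fin.last (rk w - rk u)) = w ∧
        (∀ i : Fin (rk w - rk u), c i.castSucc ⋖ c i.succ) ∧
        ∀ i j : Fin (rk w - rk u), i ≤ j →
          lab (c i.castSucc) (c i.succ) ≤ lab (c j.castSucc) (c j.succ)

/-- The label sequence `(λ_0, …, λ_n)` of a maximal chain `c` with sign-set `E`: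
`λ_0 = 0` and `λ_i = ±λ(c_{i-1}, c_i)`, negative exactly when `i ∈ E`. -/
def lamSeq {n : ℕ} (lab : P → P → ℤ) (c : Fin (n + 1) → P) (E : Finset ℕ) :
    Fin (n + 1) → ℤ :=
  fun j =>
    if j = 0 then 0
    else (if (j : ℕ) ∈ E then -1 else 1) * lab (c ⟨j.1 - 1, by omega⟩) (c j)

/-- The `ab`-monomial `m(M,E) = m_0 ⋯ m_{n-1}` with `m_i = b` if `λ_i > λ_{i+1}`
and `m_i = a` if `λ_i ≤ λ_{i+1}`. -/
def rlabWord {n : ℕ} (lab : P → P → ℤ) (c : Fin (n + 1) → P) (E : Finset ℕ) :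
    FreeMonoid Bool :=
  FreeMonoid.ofList
    (List.ofFn fun i : Fin n => decide (lamSeq lab c E i.succ < lamSeq lab c E i.castSucc))

end

/-! Splitting off the second element `w` of every chain `0̂ < w < ⋯ < 1̂` gives
`Ψ̃_P = (a-b)^{n-1} + ∑_{0̂<w<1̂} (a-b)^{rk w - 1} b Ψ̃_{[w,1̂]}`, so it remains to compute `ω` on
`(a-b)^k` and on `(a-b)^k b f`. Since `ω` acts letter by letter (with `ab` as a block), it satisfies
`ω(b f) = (b + ya) ω(f)` and the three-term recurrence
`ω((a-b)^2 g) = (1-y)(a-b) ω((a-b) g) + y (a-b)^2 ω(g)`, which yields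
`(1+y) ω((a-b)^k) = (1-(-y)^{k+1}) (a-b)^k` and
`ω((a-b)^k b f) = (a-b)^k (b - (-y)^{k+1} a) ω(f)`. -/

noncomputable section

lemma iota_zero : iota 0 = 0 := Finsupp.sum_zero_index

lemma iota_add (f g : NCPoly) : iota (f + g) = iota f + iota g := by
  refine Finsupp.sum_add_index' (fun w => ?_) (fun w c d => ?_) <;>
    rcases FreeMonoid.toList w with _ | ⟨x, l⟩ <;> simp [add_smul]

def iotaAddHom : NCPoly →+ NCPoly := ⟨⟨iota, iota_zero⟩, iota_add⟩

lemma iota_sub (f g : NCPoly) : iota (f - g) = iota f - iota g := map_sub iotaAddHom f g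

lemma iota_sum {ι : Type*} (s : Finset ι) (f : ι → NCPoly) :
    iota (∑ i ∈ s, f i) = ∑ i ∈ s, iota (f i) :=
  map_sum iotaAddHom f s

lemma iota_of_mul (x : Bool) (f : NCPoly) :
    iota (MonoidAlgebra.of NCR (FreeMonoid Bool) (FreeMonoid.of x) * f) = f := by
  induction f using MonoidAlgebra.induction_linear with
  | zero => rw [mul_zero, iota_zero]
  | add f g hf hg => rw [mul_add, iota_add, hf, hg]
  | single w c =>
    rw [MonoidAlgebra.of_apply, MonoidAlgebra.single_mul_single, one_mul, iota,
      MonoidAlgebra.coeff_single, Finsupp.sum_single_index (by simp), FreeMonoid.toList_of_mul]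
    simp

lemma iota_Aa_sub_Bb_mul (f : NCPoly) : iota ((Aa - Bb) * f) = 0 := by
  rw [sub_mul, iota_sub]
  exact sub_eq_zero.2 ((iota_of_mul false f).trans (iota_of_mul true f).symm)

lemma omega_zero : omega 0 = 0 := Finsupp.sum_zero_index

lemma omega_add (f g : NCPoly) : omega (f + g) = omega f + omega g :=
  Finsupp.sum_add_index' (fun _ => zero_smul _ _) (fun _ _ _ => add_smul _ _ _)

def omegaAddHom : NCPoly →+ NCPoly := ⟨⟨omega, omega_zero⟩, omega_add⟩

lemma omega_sub (f g : NCPoly) : omega (f - g) = omega f - omega g := map_sub omegaAddHom f g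

lemma omega_sum {ι : Type*} (s : Finset ι) (f : ι → NCPoly) :
    omega (∑ i ∈ s, f i) = ∑ i ∈ s, omega (f i) :=
  map_sum omegaAddHom f s

lemma omega_single (w : FreeMonoid Bool) (c : NCR) :
    omega (MonoidAlgebra.single w c) = c • omegaWord w.toList :=
  Finsupp.sum_single_index (zero_smul _ _)

lemma omega_single_mul {u v : FreeMonoid Bool} {R : NCPoly}
    (h : ∀ l, omegaWord (u.toList ++ l) = R * omegaWord (v.toList ++ l)) (f : NCPoly) :
    omega (MonoidAlgebra.single u 1 * f) = R * omega (MonoidAlgebra.single v 1 * f) := by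
  induction f using MonoidAlgebra.induction_linear with
  | zero => simp only [mul_zero, omega_zero]
  | add f g hf hg => simp only [mul_add, omega_add, hf, hg]
  | single w c =>
    simp only [MonoidAlgebra.single_mul_single, one_mul, omega_single, FreeMonoid.toList_mul, h,
      mul_smul_comm]

lemma Aa_eq_single : Aa = MonoidAlgebra.single (FreeMonoid.of false) 1 := rfl

lemma Bb_eq_single : Bb = MonoidAlgebra.single (FreeMonoid.of true) 1 := rfl

lemma omega_Bb_mul (f : NCPoly) : omega (Bb * f) = (Bb + (X : NCR) • Aa) * omega f := by
  have := omega_single_mul (u := FreeMonoid.of true) (v := 1) (R := Bb + (X : NCR) • Aa)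
    (fun l => by rw [FreeMonoid.toList_of, FreeMonoid.toList_one]; rfl) f
  rwa [← Bb_eq_single, ← MonoidAlgebra.one_def, one_mul] at this

lemma omega_Aa_Bb_mul (f : NCPoly) :
    omega (Aa * (Bb * f)) =
      ((1 + X : NCR) • (Aa * Bb) + (X + X ^ 2 : NCR) • (Bb * Aa)) * omega f := by
  have hab : MonoidAlgebra.single (FreeMonoid.of false * FreeMonoid.of true) 1 = Aa * Bb := by
    rw [Aa_eq_single, Bb_eq_single, MonoidAlgebra.single_mul_single, one_mul]
  have := omega_single_mul (u := FreeMonoid.of false * FreeMonoid.of true) (v := 1)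
    (R := (1 + X : NCR) • (Aa * Bb) + (X + X ^ 2 : NCR) • (Bb * Aa))
    (fun l => show omegaWord (false :: true :: l) = _ * omegaWord l by rw [omegaWord]) f
  rwa [hab, ← MonoidAlgebra.one_def, one_mul, mul_assoc] at this

lemma omega_Aa_Aa_mul (f : NCPoly) :
    omega (Aa * (Aa * f)) = (Aa + (X : NCR) • Bb) * omega (Aa * f) := by
  have haa : MonoidAlgebra.single (FreeMonoid.of false * FreeMonoid.of false) 1 = Aa * Aa := by
    rw [Aa_eq_single, MonoidAlgebra.single_mul_single, one_mul]
  have := omega_single_mul (u := FreeMonoid.of false * FreeMonoid.of false)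
    (v := FreeMonoid.of false) (R := Aa + (X : NCR) • Bb)
    (fun l => show omegaWord (false :: false :: l) = _ * omegaWord (false :: l) by
      rw [omegaWord]; simp) f
  rwa [haa, ← Aa_eq_single, mul_assoc] at this

lemma omega_one : omega 1 = 1 := by
  rw [MonoidAlgebra.one_def, omega_single, FreeMonoid.toList_one, omegaWord, one_smul]
  rfl

lemma omega_Aa : omega Aa = Aa + (X : NCR) • Bb := by
  rw [Aa_eq_single, omega_single, FreeMonoid.toList_of, one_smul, omegaWord]
  · rw [omegaWord, mul_one]; rfl
  · simp

lemma omega_Bb : omega Bb = Bb + (X : NCR) • Aa := by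
  simpa [omega_one] using omega_Bb_mul 1

/-- The coefficient `y` comes from `ω(a)ω(b) - ω(ab) = (a+yb)(b+ya) - (1+y)ab - (y+y²)ba
= y(a-b)^2`. -/
lemma omega_Aa_sub_Bb_sq_mul (g : NCPoly) :
    omega ((Aa - Bb) ^ 2 * g) =
      (1 - X : NCR) • ((Aa - Bb) * omega ((Aa - Bb) * g)) +
        (X : NCR) • ((Aa - Bb) ^ 2 * omega g) := by
  have hAa : omega (Aa * g) = omega ((Aa - Bb) * g) + (Bb + (X : NCR) • Aa) * omega g := by
    rw [sub_mul, omega_sub, omega_Bb_mul, sub_add_cancel]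
  have hexp : (Aa - Bb) ^ 2 * g = Aa * (Aa * g) - Aa * (Bb * g) - Bb * ((Aa - Bb) * g) := by
    simp only [sq, sub_mul, mul_sub, mul_assoc]; abel
  rw [hexp, omega_sub, omega_sub, omega_Aa_Aa_mul, omega_Aa_Bb_mul, omega_Bb_mul, hAa]
  generalize omega ((Aa - Bb) * g) = F₁
  generalize omega g = F₀
  simp only [sq, mul_add, add_mul, mul_sub, sub_mul, smul_mul_assoc, mul_smul_comm, smul_smul,
    smul_sub, smul_add, mul_assoc]
  module

lemma smul_omega_Aa_sub_Bb_pow_mul {c : NCR} {g U V : NCPoly}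
    (h₀ : c • omega g = U - (-X : NCR) • V)
    (h₁ : c • omega ((Aa - Bb) * g) = (Aa - Bb) * (U - (-X : NCR) ^ 2 • V)) (k : ℕ) :
    c • omega ((Aa - Bb) ^ k * g) = (Aa - Bb) ^ k * (U - (-X : NCR) ^ (k + 1) • V) := by
  induction k using Nat.twoStepInduction with
  | zero => simpa using h₀
  | one => simpa using h₁
  | more k ih₀ ih₁ =>
    rw [show (Aa - Bb) ^ (k + 2) * g = (Aa - Bb) ^ 2 * ((Aa - Bb) ^ k * g) by
      rw [← mul_assoc, ← pow_add, add_comm], omega_Aa_sub_Bb_sq_mul, ← mul_assoc, ← pow_succ',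
      smul_add, smul_comm c, smul_comm c, ← mul_smul_comm c, ← mul_smul_comm c, ih₀, ih₁]
    generalize Aa - Bb = D
    simp only [pow_succ' D, pow_zero, mul_one]
    generalize D ^ k = p
    simp only [mul_sub, mul_smul_comm, smul_sub, smul_smul, mul_assoc]
    module

lemma one_add_X_smul_omega_Aa_sub_Bb_pow (k : ℕ) :
    (1 + X : NCR) • omega ((Aa - Bb) ^ k) = (1 - (-X : NCR) ^ (k + 1)) • (Aa - Bb) ^ k := by
  have h := smul_omega_Aa_sub_Bb_pow_mul (c := 1 + X) (g := 1) (U := 1) (V := 1) ?_ ?_ k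
  · simpa only [mul_one, mul_sub, mul_smul_comm, sub_smul, one_smul] using h
  · rw [omega_one]; module
  · rw [mul_one, omega_sub, omega_Aa, omega_Bb]
    simp only [smul_sub, smul_add, smul_smul, mul_sub, mul_one, mul_smul_comm]
    module

lemma omega_Aa_sub_Bb_pow_mul_Bb_mul (k : ℕ) (f : NCPoly) :
    omega ((Aa - Bb) ^ k * (Bb * f)) =
      (Aa - Bb) ^ k * (Bb - ((-X : NCR) ^ (k + 1)) • Aa) * omega f := by
  have h := smul_omega_Aa_sub_Bb_pow_mul (c := 1) (g := Bb * f) (U := Bb * omega f)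
    (V := Aa * omega f) ?_ ?_ k
  · rw [one_smul] at h
    rw [h, mul_assoc, sub_mul, smul_mul_assoc]
  · rw [one_smul, omega_Bb_mul]
    simp only [add_mul, smul_mul_assoc]
    module
  · rw [one_smul, sub_mul, omega_sub, omega_Aa_Bb_mul, omega_Bb_mul, omega_Bb_mul]
    generalize omega f = F
    simp only [sq, mul_add, add_mul, mul_sub, sub_mul, smul_mul_assoc, mul_smul_comm,
      smul_smul, smul_sub, smul_add, mul_assoc]
    module

def wtList (l : List ℕ) (S : Finset ℕ) : NCPoly :=
  (l.map fun j => if j ∈ S then Bb else Aa - Bb).prod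

lemma wtS_eq_wtList (n : ℕ) (S : Finset ℕ) : wtS n S = wtList (List.range n) S := rfl

lemma wtList_cons (j : ℕ) (l : List ℕ) (S : Finset ℕ) :
    wtList (j :: l) S = (if j ∈ S then Bb else Aa - Bb) * wtList l S := by
  simp [wtList]

lemma wtList_append (l₁ l₂ : List ℕ) (S : Finset ℕ) :
    wtList (l₁ ++ l₂) S = wtList l₁ S * wtList l₂ S := by
  simp [wtList]

lemma wtList_map {f : ℕ → ℕ} {l : List ℕ} {S T : Finset ℕ} (h : ∀ j ∈ l, f j ∈ S ↔ j ∈ T) :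
    wtList (l.map f) S = wtList l T := by
  simp only [wtList, List.map_map]
  exact congrArg List.prod (List.map_congr_left fun j hj => if_congr (h j hj) rfl rfl)

lemma wtList_eq_pow {l : List ℕ} {S : Finset ℕ} (h : ∀ j ∈ l, j ∉ S) :
    wtList l S = (Aa - Bb) ^ l.length := by
  rw [wtList, List.map_congr_left fun j hj => if_neg (h j hj), List.map_const', List.prod_replicate]

lemma iota_wtS (m : ℕ) (S : Finset ℕ) :
    iota (wtS (m + 1) S) = if 0 ∈ S then wtList (List.range' 1 m) S else 0 := by
  rw [wtS_eq_wtList, List.range_eq_range', List.range'_succ, wtList_cons]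
  split_ifs
  · exact iota_of_mul true _
  · exact iota_Aa_sub_Bb_mul _

section Chains

variable {P : Type*}

/-- The set `S` with `wt_C = wt_S` for the chain `C = c`, ranks taken relative to `u`. -/
def rankSet (rk : P → ℕ) (u : P) {k : ℕ} (c : Fin (k + 1) → P) : Finset ℕ :=
  Finset.univ.image fun i : Fin k => rk (c i.castSucc) - rk u

lemma mem_rankSet {rk : P → ℕ} {u : P} {k : ℕ} {c : Fin (k + 1) → P} {s : ℕ} :
    s ∈ rankSet rk u c ↔ ∃ i : Fin k, rk (c i.castSucc) - rk u = s := by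
  simp [rankSet]

lemma rankSet_cons (rk : P → ℕ) (u x : P) {k : ℕ} (d : Fin (k + 1) → P) :
    rankSet rk u (Fin.cons x d : Fin (k + 2) → P) = insert (rk x - rk u) (rankSet rk u d) := by
  ext s
  simp [mem_rankSet, Fin.exists_fin_succ, eq_comm]

variable [Fintype P] [PartialOrder P]

lemma strictMono_of_covBy_succ {rk : P → ℕ} (hrk_cov : ∀ u v : P, u ⋖ v → rk v = rk u + 1) :
    StrictMono rk := by
  classical
  let := Fintype.toLocallyFiniteOrder (α := P)
  exact (strictMono_iff_forall_covBy rk).2 fun u v h => (hrk_cov u v h).symm ▸ Nat.lt_succ_self _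

variable [BoundedOrder P]

open Classical in
def chainsFrom (u : P) (k : ℕ) : Finset (Fin (k + 1) → P) :=
  Finset.univ.filter fun c => StrictMono c ∧ c (Fin.last k) = ⊤ ∧ c 0 = u

lemma mem_chainsFrom {u : P} {k : ℕ} {c : Fin (k + 1) → P} :
    c ∈ chainsFrom u k ↔ StrictMono c ∧ c (Fin.last k) = ⊤ ∧ c 0 = u := by
  simp [chainsFrom]

lemma chainsFrom_zero_of_ne_top {u : P} (hu : u ≠ ⊤) : chainsFrom u 0 = ∅ :=
  Finset.eq_empty_of_forall_notMem fun c hc => hu <| by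
    obtain ⟨-, hlast, h0⟩ := mem_chainsFrom.1 hc
    exact h0 ▸ hlast

lemma chainsFrom_top_zero : chainsFrom (⊤ : P) 0 = {fun _ => ⊤} := by
  ext c
  rw [mem_chainsFrom, Finset.mem_singleton]
  constructor
  · rintro ⟨-, -, h⟩
    exact funext fun i => Fin.fin_one_eq_zero i ▸ h
  · rintro rfl
    exact ⟨fun i j h => absurd h (by simp [Fin.fin_one_eq_zero]), rfl, rfl⟩

lemma chainsFrom_top_succ (k : ℕ) : chainsFrom (⊤ : P) (k + 1) = ∅ :=
  Finset.eq_empty_of_forall_notMem fun c hc => by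
    obtain ⟨hc, hlast, h0⟩ := mem_chainsFrom.1 hc
    exact (hc (Fin.last_pos : (0 : Fin (k + 2)) < Fin.last (k + 1))).ne (h0.trans hlast.symm)

lemma chainsFrom_card (u : P) : chainsFrom u (Fintype.card P) = ∅ :=
  Finset.eq_empty_of_forall_notMem fun c hc => by
    have := Fintype.card_le_of_injective c (mem_chainsFrom.1 hc).1.injective
    simp at this

open Classical in
lemma sum_chainsFrom_succ {M : Type*} [AddCommMonoid M] (u : P) (k : ℕ)
    (f : (Fin (k + 2) → P) → M) :
    ∑ c ∈ chainsFrom u (k + 1), f c =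
      ∑ x ∈ Finset.univ.filter (u < ·), ∑ d ∈ chainsFrom x k, f (Fin.cons u d) := by
  rw [Finset.sum_sigma']
  symm
  refine Finset.sum_nbij' (fun p => Fin.cons u p.2) (fun c => ⟨c 1, Fin.tail c⟩) ?_ ?_ ?_ ?_
    (fun _ _ => rfl)
  · rintro ⟨x, d⟩ hd
    simp only [Finset.mem_sigma, Finset.mem_filter, Finset.mem_univ, true_and,
      mem_chainsFrom] at hd
    obtain ⟨hux, hd, hlast, rfl⟩ := hd
    refine mem_chainsFrom.2 ⟨Fin.strictMono_cons.2 ⟨fun j => hux.trans_le ?_, hd⟩, ?_, rfl⟩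
    · exact hd.monotone (Fin.zero_le j)
    · rwa [← Fin.succ_last, Fin.cons_succ]
  · intro c hc
    obtain ⟨hc, hlast, h0⟩ := mem_chainsFrom.1 hc
    simp only [Finset.mem_sigma, Finset.mem_filter, Finset.mem_univ, true_and, mem_chainsFrom]
    refine ⟨h0 ▸ hc Fin.zero_lt_one, hc.comp (Fin.strictMono_succ), ?_, rfl⟩
    simpa [Fin.tail] using hlast
  · rintro ⟨x, d⟩ hd
    simp only [Finset.mem_sigma, mem_chainsFrom] at hd
    obtain ⟨-, -, -, rfl⟩ := hd
    rfl
  · intro c hc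
    rw [← (mem_chainsFrom.1 hc).2.2]
    exact Fin.cons_self_tail c

end Chains

lemma Finset.sum_range_succ_eq_sum_range {M : Type*} [AddCommMonoid M] {f : ℕ → M} {N : ℕ}
    (h₀ : f 0 = 0) (hN : f N = 0) :
    ∑ k ∈ Finset.range N, f (k + 1) = ∑ k ∈ Finset.range N, f k := by
  have h := (Finset.sum_range_succ' f N).symm.trans (Finset.sum_range_succ f N)
  rwa [h₀, hN, add_zero, add_zero] at h

section Recursion

variable {P : Type*} [Fintype P] [PartialOrder P] [BoundedOrder P] {rk : P → ℕ}

lemma sum_range_sum_chainsFrom_top {M : Type*} [AddCommMonoid M]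
    (g : (k : ℕ) → (Fin (k + 1) → P) → M) :
    ∑ k ∈ Finset.range (Fintype.card P), ∑ d ∈ chainsFrom ⊤ k, g k d = g 0 fun _ => ⊤ := by
  obtain ⟨N, hN⟩ := Nat.exists_eq_add_one.2 (Fintype.card_pos_iff.2 ⟨(⊤ : P)⟩)
  simp [hN, Finset.sum_range_succ', chainsFrom_top_zero, chainsFrom_top_succ]

/-- `ι` keeps exactly the chains that start at `w`, i.e. those whose rank set contains `0`. -/
lemma psiTildeFrom_eq_sum_chainsFrom (hrk : StrictMono rk) {w : P} (hw : w < ⊤) :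
    psiTildeFrom rk w = ∑ k ∈ Finset.range (Fintype.card P), ∑ c ∈ chainsFrom w k,
      wtList (List.range' 1 (rk ⊤ - rk w - 1)) (rankSet rk w c) := by
  obtain ⟨m, hm⟩ : ∃ m, rk ⊤ - rk w = m + 1 := ⟨rk ⊤ - rk w - 1, by have := hrk hw; omega⟩
  rw [psiTildeFrom, psiFrom, iota_sum, hm, Nat.add_sub_cancel]
  refine Finset.sum_congr rfl fun k _ => ?_
  rw [iota_sum, ← Finset.sum_subset (s₁ := chainsFrom w k) ?_ ?_]
  · refine Finset.sum_congr rfl fun c hc => ?_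
    obtain ⟨-, hlast, h0⟩ := mem_chainsFrom.1 hc
    obtain ⟨k, rfl⟩ : ∃ k', k = k' + 1 :=
      Nat.exists_eq_add_one.2 (Nat.pos_of_ne_zero fun hk => by subst hk; exact hw.ne (h0 ▸ hlast))
    refine (iota_wtS m _).trans (if_pos (mem_rankSet.2 ⟨0, ?_⟩))
    rw [Fin.castSucc_zero, h0, Nat.sub_self]
  · intro c hc
    simp only [mem_chainsFrom, Finset.mem_filter, Finset.mem_univ, true_and] at hc ⊢
    exact ⟨hc.1, hc.2.1, hc.2.2.symm ▸ le_rfl⟩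
  · intro c hc hc'
    simp only [mem_chainsFrom, Finset.mem_filter, Finset.mem_univ, true_and] at hc hc'
    obtain ⟨hc, hlast, hw0⟩ := hc
    have hw0 : w < c 0 := lt_of_le_of_ne hw0 fun h => hc' ⟨hc, hlast, h.symm⟩
    refine (iota_wtS m _).trans (if_neg fun h0 => ?_)
    obtain ⟨i, hi⟩ := mem_rankSet.1 h0
    have := hrk (hw0.trans_le (hc.monotone (Fin.zero_le i.castSucc)))
    omega

/-- Of the positions `1, …, rk ⊤ - rk u - 1`, those below `rk w - rk u` carry no element of the
chain `u < w = d_0 < ⋯ < d_k = ⊤`, the position `rk w - rk u` carries `w`, and the remaining ones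
are the positions for `[w, ⊤]`, shifted. -/
lemma wtList_rankSet_cons (hrk : StrictMono rk) {u w : P} (huw : u < w) (hw : w < ⊤) {k : ℕ}
    {d : Fin (k + 1) → P} (hd : d ∈ chainsFrom w k) :
    wtList (List.range' 1 (rk ⊤ - rk u - 1)) (rankSet rk u (Fin.cons u d : Fin (k + 2) → P)) =
      (Aa - Bb) ^ (rk w - rk u - 1) *
        (Bb * wtList (List.range' 1 (rk ⊤ - rk w - 1)) (rankSet rk w d)) := by
  obtain ⟨hmono, hlast, rfl⟩ := mem_chainsFrom.1 hd
  obtain ⟨k, rfl⟩ : ∃ k', k = k' + 1 :=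
    Nat.exists_eq_add_one.2 (Nat.pos_of_ne_zero fun hk => by subst hk; exact hw.ne hlast)
  have hu := hrk huw
  have ht := hrk hw
  have hge : ∀ i : Fin (k + 1), rk (d 0) ≤ rk (d i.castSucc) :=
    fun i => hrk.monotone (hmono.monotone (Fin.zero_le _))
  have hsplit : List.range' 1 (rk ⊤ - rk u - 1) =
      List.range' 1 (rk (d 0) - rk u - 1) ++ (rk (d 0) - rk u) ::
        (List.range' 1 (rk ⊤ - rk (d 0) - 1)).map (rk (d 0) - rk u + ·) := by
    obtain ⟨r, hr⟩ : ∃ r, rk (d 0) - rk u = 1 + r := ⟨rk (d 0) - rk u - 1, by omega⟩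
    rw [List.map_add_range', ← List.range'_succ, hr, Nat.add_sub_cancel_left, List.range'_append_1]
    congr 1
    omega
  rw [hsplit, rankSet_cons, Nat.sub_self, wtList_append, wtList_cons, wtList_map, wtList_eq_pow,
    List.length_range', if_pos]
  · exact Finset.mem_insert_of_mem (mem_rankSet.2 ⟨0, by rw [Fin.castSucc_zero]⟩)
  · intro j hj
    simp only [List.mem_range'_1, Finset.mem_insert, mem_rankSet, not_or, not_exists] at hj ⊢
    exact ⟨by omega, fun i => by have := hge i; omega⟩
  · intro j hj
    simp only [List.mem_range'_1, Finset.mem_insert, mem_rankSet] at hj ⊢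
    exact (or_iff_right (by omega)).trans (exists_congr fun i => by have := hge i; omega)

open Classical in
theorem psiTildeFrom_eq_add_sum (hrk : StrictMono rk) {u : P} (hu : u < ⊤) :
    psiTildeFrom rk u = (Aa - Bb) ^ (rk ⊤ - rk u - 1) +
      ∑ w ∈ Finset.univ.filter fun w : P => u < w ∧ w < ⊤,
        (Aa - Bb) ^ (rk w - rk u - 1) * (Bb * psiTildeFrom rk w) := by
  have hsplit : Finset.univ.filter (u < ·) =
      insert ⊤ (Finset.univ.filter fun w : P => u < w ∧ w < ⊤) := by
    ext w
    simp only [Finset.mem_filter, Finset.mem_univ, true_and, Finset.mem_insert]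
    exact ⟨fun h => (eq_or_lt_of_le le_top).imp id (⟨h, ·⟩), by rintro (rfl | h); exacts [hu, h.1]⟩
  rw [psiTildeFrom_eq_sum_chainsFrom hrk hu, ← Finset.sum_range_succ_eq_sum_range
    (by rw [chainsFrom_zero_of_ne_top hu.ne, Finset.sum_empty])
    (by rw [chainsFrom_card, Finset.sum_empty])]
  simp_rw [sum_chainsFrom_succ]
  rw [Finset.sum_comm, hsplit, Finset.sum_insert (by simp), sum_range_sum_chainsFrom_top]
  congr 1
  · refine (wtList_eq_pow fun j hj => ?_).trans (by rw [List.length_range'])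
    simp only [List.mem_range'_1] at hj
    simp [rankSet_cons, mem_rankSet]
    omega
  · refine Finset.sum_congr rfl fun w hw => ?_
    rw [Finset.mem_filter] at hw
    rw [psiTildeFrom_eq_sum_chainsFrom hrk hw.2.2, Finset.mul_sum, Finset.mul_sum]
    refine Finset.sum_congr rfl fun k _ => ?_
    rw [Finset.mul_sum, Finset.mul_sum]
    exact Finset.sum_congr rfl fun d hd => wtList_rankSet_cons hrk hw.2.1 hw.2.2 hd

end Recursion

end

open Classical in
/-- For a finite, graded, bounded poset of rank `n ≥ 1`,
`(1+y)·ω(Ψ̃_P) = (1-(-y)^n)·(a-b)^{n-1} + (1+y)·∑_{0̂<w<1̂} (a-b)^{rk w - 1}(b - (-y)^{rk w}·a)·ω(Ψ̃_{[w,1̂]})`. -/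
theorem omega_psiTilde_recursion
    {P : Type*} [Fintype P] [PartialOrder P] [BoundedOrder P]
    (rk : P → ℕ) (n : ℕ) (hn : 1 ≤ n)
    (hrk_bot : rk (⊥ : P) = 0) (hrk_top : rk (⊤ : P) = n)
    (hrk_cov : ∀ u v : P, u ⋖ v → rk v = rk u + 1) :
    (1 + X : Polynomial ℤ) • omega (psiTildeFrom rk (⊥ : P)) =
      ((1 : Polynomial ℤ) - (-X) ^ n) • (Aa - Bb) ^ (n - 1) +
        (1 + X : Polynomial ℤ) •
          ∑ w ∈ Finset.univ.filter fun w : P => ⊥ < w ∧ w < ⊤,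
            (Aa - Bb) ^ (rk w - 1) * (Bb - ((-X : Polynomial ℤ) ^ rk w) • Aa) *
              omega (psiTildeFrom rk w) := by
  have hrk := strictMono_of_covBy_succ hrk_cov
  have hbt : (⊥ : P) < ⊤ := bot_le.lt_of_ne fun h => by have := congrArg rk h; omega
  rw [psiTildeFrom_eq_add_sum hrk hbt, hrk_bot, hrk_top, omega_add, omega_sum, smul_add,
    Nat.sub_zero, one_add_X_smul_omega_Aa_sub_Bb_pow, Nat.sub_add_cancel hn]
  congr 2
  refine Finset.sum_congr rfl fun w hw => ?_
  have hw : 0 < rk w := hrk_bot ▸ hrk (Finset.mem_filter.1 hw).2.1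
  rw [Nat.sub_zero, omega_Aa_sub_Bb_pow_mul_Bb_mul, Nat.sub_add_cancel hw]
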